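/- Let k be an algebraically closed field of characteristic p > 0, let Y be a finitely generated free abelian group, and let 𝔄 : Y → Y be a group homomorphism such that det(𝔄) ≠ 0 and p does not divide det(𝔄). Then the kernel of the endomorphism of k^× ⊗_ℤ Y induced by 𝔄 (sending z ⊗ y to z ⊗ 𝔄(y)) is a finite group of cardinality |det(𝔄)|; in particular its order is prime to p. -/

import Mathlib

/-!
Smith normal form gives bases `c`, `b` of `Y` and integers `aᵢ` with `𝔄 cᵢ = aᵢ • bᵢ` and
`∏ |aᵢ| = [Y : 𝔄 Y] = |det 𝔄|`. In these coordinates `k^× ⊗ Y ≅ (k^×)ⁿ` and `1 ⊗ 𝔄` acts by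
`(zᵢ) ↦ (zᵢ ^ aᵢ)`, so its kernel is `∏ μ_{|aᵢ|}(k)`. Since `p ∤ aᵢ` and `k` is algebraically
closed, `μ_{|aᵢ|}(k)` has exactly `|aᵢ|` elements.
-/

open scoped TensorProduct
open Module Submodule

section Diagonal

variable {R M Y Y' ι : Type*} [CommRing R] [AddCommGroup M] [Module R M]
  [AddCommGroup Y] [Module R Y] [AddCommGroup Y'] [Module R Y']

theorem Module.Basis.repr_apply_eq_mul_of_apply_eq_smul {f : Y →ₗ[R] Y'} {c : Basis ι R Y}
    {b : Basis ι R Y'} {a : ι → R} (h : ∀ i, f (c i) = a i • b i) (y : Y) (i : ι) :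
    b.repr (f y) i = a i * c.repr y i := by
  have := c.ext (f₁ := (Finsupp.lapply i ∘ₗ b.repr.toLinearMap ∘ₗ f))
    (f₂ := a i • (Finsupp.lapply i ∘ₗ c.repr.toLinearMap)) fun j => by
      obtain rfl | hij := eq_or_ne i j <;> simp [*]
  exact LinearMap.congr_fun this y

variable [Fintype ι] [DecidableEq ι]

variable (M) in
noncomputable def Module.Basis.lTensorEquivPi (c : Basis ι R Y) : M ⊗[R] Y ≃ₗ[R] (ι → M) :=
  (LinearEquiv.lTensor M c.equivFun).trans (TensorProduct.piScalarRight R R M ι)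

@[simp]
theorem Module.Basis.lTensorEquivPi_tmul (c : Basis ι R Y) (m : M) (y : Y) (i : ι) :
    c.lTensorEquivPi M (m ⊗ₜ y) i = c.repr y i • m := by
  simp [Module.Basis.lTensorEquivPi]

theorem Module.Basis.lTensorEquivPi_lTensor {f : Y →ₗ[R] Y'} {c : Basis ι R Y}
    {b : Basis ι R Y'} {a : ι → R} (h : ∀ i, f (c i) = a i • b i) (x : M ⊗[R] Y) (i : ι) :
    b.lTensorEquivPi M (f.lTensor M x) i = a i • c.lTensorEquivPi M x i := by
  induction x using TensorProduct.induction_on with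
  | zero => simp
  | tmul m y => simp [Module.Basis.repr_apply_eq_mul_of_apply_eq_smul h, mul_smul]
  | add x x' hx hx' => simp [hx, hx']

noncomputable def LinearMap.kerLTensorEquivPiTorsionBy {f : Y →ₗ[R] Y'} {c : Basis ι R Y}
    {b : Basis ι R Y'} {a : ι → R} (h : ∀ i, f (c i) = a i • b i) :
    ker (f.lTensor M) ≃ Π i, torsionBy R M (a i) :=
  ((c.lTensorEquivPi M).toEquiv.subtypeEquiv fun x => by
      rw [mem_ker, ← (b.lTensorEquivPi M).map_eq_zero_iff, funext_iff]
      simp only [Module.Basis.lTensorEquivPi_lTensor h]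
      rfl).trans Equiv.subtypePiEquivPi

end Diagonal

theorem LinearMap.natAbs_det_eq_card_quotient_range {Y : Type*} [AddCommGroup Y] [Free ℤ Y]
    [Module.Finite ℤ Y] {f : Y →ₗ[ℤ] Y} (hf : Function.Injective f) :
    (LinearMap.det f).natAbs = Nat.card (Y ⧸ range f) := by
  convert natAbs_det_equiv (range f) (LinearEquiv.ofInjective f hf) using 3
  ext; rfl

theorem LinearMap.exists_smith_normal_form_of_injective {Y : Type*} [AddCommGroup Y] [Free ℤ Y]
    [Module.Finite ℤ Y] {f : Y →ₗ[ℤ] Y} (hf : Function.Injective f) :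
    ∃ (b c : Basis (Free.ChooseBasisIndex ℤ Y) ℤ Y) (a : Free.ChooseBasisIndex ℤ Y → ℤ),
      (∀ i, f (c i) = a i • b i) ∧ (LinearMap.det f).natAbs = ∏ i, (a i).natAbs := by
  have h : finrank ℤ (range f) = finrank ℤ Y := finrank_range_of_inj hf
  let b₀ := Free.chooseBasis ℤ Y
  refine ⟨smithNormalFormTopBasis b₀ h, (smithNormalFormBotBasis b₀ h).map
    (LinearEquiv.ofInjective f hf).symm, smithNormalFormCoeffs b₀ h, fun i => ?_, ?_⟩
  · simp
  · rw [natAbs_det_eq_card_quotient_range hf, Nat.card_congr (quotientEquivPiZMod _ b₀ h).toEquiv,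
      Nat.card_pi]
    simp only [Nat.card_zmod]

noncomputable def Units.torsionByEquivRootsOfUnity (M : Type*) [CommMonoid M] (d : ℤ) :
    torsionBy ℤ (Additive Mˣ) d ≃ rootsOfUnity d.natAbs M :=
  Equiv.subtypeEquiv Additive.toMul fun m => by
    rw [mem_torsionBy_iff, mem_rootsOfUnity, pow_natAbs_eq_one, ← toMul_zsmul, toMul_eq_one]

theorem Units.natCard_torsionBy (k : Type*) [Field k] [IsSepClosed k] (d : ℤ)
    (hd : (d.natAbs : k) ≠ 0) : Nat.card (torsionBy ℤ (Additive kˣ) d) = d.natAbs := by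
  have : NeZero (d.natAbs : k) := ⟨hd⟩
  have : NeZero d.natAbs := .of_neZero_natCast k
  rw [Nat.card_congr (Units.torsionByEquivRootsOfUnity k d),
    HasEnoughRootsOfUnity.natCard_rootsOfUnity]

theorem stmt_16 {k : Type*} [Field k] [IsAlgClosed k] (p : ℕ) [CharP k p]
    {Y : Type*} [AddCommGroup Y] [Module.Free ℤ Y] [Module.Finite ℤ Y]
    (𝔄 : Y →ₗ[ℤ] Y) (hdet : LinearMap.det 𝔄 ≠ 0) (hpdet : ¬ ((p : ℤ) ∣ LinearMap.det 𝔄)) :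
    Finite (LinearMap.ker (LinearMap.lTensor (Additive kˣ) 𝔄)) ∧
    Nat.card (LinearMap.ker (LinearMap.lTensor (Additive kˣ) 𝔄)) =
      (LinearMap.det 𝔄).natAbs ∧
    ¬ (p ∣ Nat.card (LinearMap.ker (LinearMap.lTensor (Additive kˣ) 𝔄))) := by
  have hinj : Function.Injective 𝔄 :=
    LinearMap.ker_eq_bot.mp (not_not.mp (mt LinearMap.det_eq_zero_iff_ker_ne_bot.mpr hdet))
  obtain ⟨b, c, a, h𝔄, hdet_eq⟩ := LinearMap.exists_smith_normal_form_of_injective hinj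
  have hp_det : ¬ p ∣ (LinearMap.det 𝔄).natAbs := by
    rwa [← Int.natCast_dvd_natCast, Int.dvd_natAbs]
  have hpa (i) : ¬ p ∣ (a i).natAbs := fun hi =>
    hp_det (hdet_eq ▸ hi.trans (Finset.dvd_prod_of_mem _ (Finset.mem_univ i)))
  have hcard : Nat.card (LinearMap.ker (LinearMap.lTensor (Additive kˣ) 𝔄)) =
      (LinearMap.det 𝔄).natAbs := by
    rw [Nat.card_congr (LinearMap.kerLTensorEquivPiTorsionBy h𝔄), Nat.card_pi, hdet_eq]
    exact Finset.prod_congr rfl fun i _ =>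
      Units.natCard_torsionBy k (a i) ((CharP.cast_eq_zero_iff k p _).not.mpr (hpa i))
  exact ⟨Nat.finite_of_card_ne_zero (hcard ▸ Int.natAbs_ne_zero.mpr hdet), hcard, hcard ▸ hp_det⟩
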